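/- Let (T, ≤) be a partially ordered set equipped with an order-preserving bijection S : T → T whose induced ℤ-action is free with finitely many orbits. Assume t < S t for all t ∈ T, and that for any t < t' there exists n ≥ 0 with t' < Sⁿ t. Then for any a ≤ b in T, the interval {t ∈ T : a ≤ t ≤ b} is finite. -/

import Mathlib

/-!
Since `t < S t` for every `t`, each orbit `n ↦ Sⁿ t` is strictly increasing in `n`, so the orbit
meets `[a, b]` in the image of the exponents `n` with `a ≤ Sⁿ t ≤ b`. These exponents are bounded
above: once some `Sⁿ⁰ t ≤ b`, the cofinality axiom applied to `Sⁿ⁰ t < S b` yields `k` with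
`b < S^(n₀ + k) t`. Transporting by the order automorphism `S⁻ⁿ` turns `a ≤ Sⁿ t` into
`S⁻ⁿ a ≤ t`, so they are bounded below as well. Finitely many orbits then cover `[a, b]`.
-/

namespace Equiv.Perm

def orderAutSubgroup (T : Type*) [PartialOrder T] : Subgroup (Perm T) where
  carrier := {σ | ∀ t t' : T, σ t ≤ σ t' ↔ t ≤ t'}
  mul_mem' hσ hτ t t' := (hσ _ _).trans (hτ t t')
  one_mem' _ _ := Iff.rfl
  inv_mem' {σ} hσ t t' := by
    rw [← hσ (σ⁻¹ t), coe_inv, apply_symm_apply, apply_symm_apply]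

variable {T : Type*} [PartialOrder T] (S : Perm T)

theorem zpow_apply_le_zpow_apply_iff (hmono : ∀ t t' : T, t ≤ t' ↔ S t ≤ S t') (n : ℤ)
    (t t' : T) : (S ^ n) t ≤ (S ^ n) t' ↔ t ≤ t' :=
  Subgroup.zpow_mem (orderAutSubgroup T) (fun t t' => (hmono t t').symm) n t t'

theorem strictMono_zpow_apply (hlt : ∀ t : T, t < S t) (t : T) :
    StrictMono fun n : ℤ => (S ^ n) t :=
  strictMono_int_of_lt_succ fun n => by
    rw [add_comm n 1, zpow_one_add, mul_apply]
    exact hlt _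

theorem bddAbove_zpow_apply_le (hlt : ∀ t : T, t < S t)
    (hcof : ∀ t t' : T, t < t' → ∃ n : ℕ, t' < (S ^ n) t) (t b : T) :
    BddAbove {n : ℤ | (S ^ n) t ≤ b} := by
  rcases Set.eq_empty_or_nonempty {n : ℤ | (S ^ n) t ≤ b} with hempty | ⟨n₀, hn₀⟩
  · simp [hempty]
  obtain ⟨k, hk⟩ := hcof _ _ (lt_of_le_of_lt hn₀ (hlt b))
  have hb : b < (S ^ ((k : ℤ) + n₀)) t := by
    rw [zpow_add, mul_apply, zpow_natCast]
    exact (hlt b).trans hk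
  refine ⟨(k : ℤ) + n₀, fun n hn => ?_⟩
  exact ((strictMono_zpow_apply S hlt t).lt_iff_lt.mp (lt_of_le_of_lt hn hb)).le

theorem bddBelow_le_zpow_apply (hmono : ∀ t t' : T, t ≤ t' ↔ S t ≤ S t')
    (hlt : ∀ t : T, t < S t) (hcof : ∀ t t' : T, t < t' → ∃ n : ℕ, t' < (S ^ n) t) (a t : T) :
    BddBelow {n : ℤ | a ≤ (S ^ n) t} := by
  have hneg : {n : ℤ | a ≤ (S ^ n) t} = -{m : ℤ | (S ^ m) a ≤ t} := by
    ext n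
    rw [Set.mem_neg, Set.mem_ofPred_eq, Set.mem_ofPred_eq,
      ← zpow_apply_le_zpow_apply_iff S hmono n ((S ^ (-n)) a), ← mul_apply, ← zpow_add,
      add_neg_cancel, zpow_zero, one_apply]
  rw [hneg, bddBelow_neg]
  exact bddAbove_zpow_apply_le S hlt hcof a t

theorem finite_orbit_inter_Icc (hmono : ∀ t t' : T, t ≤ t' ↔ S t ≤ S t')
    (hlt : ∀ t : T, t < S t) (hcof : ∀ t t' : T, t < t' → ∃ n : ℕ, t' < (S ^ n) t) (t a b : T) :
    ({t' : T | ∃ n : ℤ, (S ^ n) t = t'} ∩ Set.Icc a b).Finite := by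
  have hexp : {n : ℤ | a ≤ (S ^ n) t ∧ (S ^ n) t ≤ b}.Finite :=
    ((bddBelow_le_zpow_apply S hmono hlt hcof a t).mono fun _ hn => hn.1).finite_of_bddAbove
      ((bddAbove_zpow_apply_le S hlt hcof t b).mono fun _ hn => hn.2)
  refine (hexp.image fun n => (S ^ n) t).subset ?_
  rintro _ ⟨⟨n, rfl⟩, hn⟩
  exact ⟨n, hn, rfl⟩

end Equiv.Perm

theorem stmt_7_general (T : Type*) [PartialOrder T] (S : Equiv.Perm T)
    (hmono : ∀ t t' : T, t ≤ t' ↔ S t ≤ S t')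
    (horb : {s : Set T | ∃ t : T, s = {t' : T | ∃ n : ℤ, (S ^ n) t = t'}}.Finite)
    (hlt : ∀ t : T, t < S t)
    (hcof : ∀ t t' : T, t < t' → ∃ n : ℕ, t' < (S ^ n) t) :
    ∀ a b : T, a ≤ b → {t : T | a ≤ t ∧ t ≤ b}.Finite := by
  intro a b _
  have hpieces := horb.biUnion fun s ⟨t, hs⟩ => hs ▸ S.finite_orbit_inter_Icc hmono hlt hcof t a b
  exact hpieces.subset fun y hy => Set.mem_biUnion ⟨y, rfl⟩ ⟨⟨0, rfl⟩, hy⟩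

/-- under the PHW axioms on a poset `T` with shift `S`, every interval `[a, b]`
is finite. -/
theorem stmt_7 (T : Type*) [PartialOrder T] (S : Equiv.Perm T)
    (hmono : ∀ t t' : T, t ≤ t' ↔ S t ≤ S t')
    (hfree : ∀ (n : ℤ) (t : T), (S ^ n) t = t → n = 0)
    (horb : {s : Set T | ∃ t : T, s = {t' : T | ∃ n : ℤ, (S ^ n) t = t'}}.Finite)
    (hlt : ∀ t : T, t < S t)
    (hcof : ∀ t t' : T, t < t' → ∃ n : ℕ, t' < (S ^ n) t) :
    ∀ a b : T, a ≤ b → {t : T | a ≤ t ∧ t ≤ b}.Finite :=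
  stmt_7_general T S hmono horb hlt hcof
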